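/- arXiv:1803.06194 — 7 statements merged into one kernel-verified Lean document; each statement's English description precedes it below -/
import Mathlib

section
/- Let R be a finite-dimensional real division algebra equipped with an involution γ (an ℝ-linear anti-automorphism with γ∘γ = id, i.e. R is a star ring and a star module over ℝ with γ = star) such that γ(a)·a = a·γ(a) and γ(a)·a lies in ℝ·1 for every a ∈ R. Then every monic polynomial C ∈ R[t] of degree n ≥ 1 that has no nonconstant monic real polynomial factor (i.e. no monic F ∈ ℝ[t] with deg F ≥ 1 whose image in R[t] divides C) admits a factorization C = (t − h₁)(t − h₂) ⋯ (t − hₙ) with h₁, …, hₙ ∈ R. -/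
/-!
Coefficientwise conjugation makes `R[X]` a star ring, and for monic `f` the norm `star f * f`
has self-adjoint, hence real, coefficients; so it has a monic irreducible real factor `p`, of
degree at most 2. Divide `f = r + p q` with `deg r < deg p`; then `r ≠ 0` because `f` has no real
factor. Since `p` is central and self-adjoint, `p ∣ star f * f` forces `p ∣ star r * r`, and
comparing degrees gives `deg r = 1` and `p = c (star r * r)` for a constant `c`. Hence
`f = (1 + q c star r) r` has the linear right factor `r`, and induction on the degree concludes.
-/

open Polynomial

namespace Polynomial

section Star

variable {R : Type*} [Semiring R] [StarRing R]

noncomputable instance : Star R[X] where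
  star f := ofFinsupp (.ofCoeff (f.toFinsupp.coeff.mapRange star (star_zero R)))

@[simp]
theorem coeff_star (f : R[X]) (n : ℕ) : (star f).coeff n = star (f.coeff n) := by
  rcases f with ⟨f⟩
  rfl

noncomputable instance : StarRing R[X] where
  star_involutive f := by ext; simp
  star_mul f g := by
    ext n
    simp only [coeff_star, coeff_mul, star_sum, star_mul]
    rw [← Finset.Nat.sum_antidiagonal_swap]
    rfl
  star_add f g := by ext; simp

@[simp]
theorem support_star (f : R[X]) : (star f).support = f.support := by
  ext; simp

@[simp]
theorem natDegree_star (f : R[X]) : (star f).natDegree = f.natDegree := by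
  simp only [natDegree, degree, support_star]

@[simp]
theorem leadingCoeff_star (f : R[X]) : (star f).leadingCoeff = star f.leadingCoeff := by
  simp only [leadingCoeff, natDegree_star, coeff_star]

theorem Monic.star {f : R[X]} (hf : f.Monic) : (star f).Monic := by
  rw [Monic, leadingCoeff_star, hf.leadingCoeff, star_one]

end Star

section Algebra

variable {K R : Type*} [CommSemiring K] [Semiring R] [Algebra K R]

theorem commute_map_algebraMap (p : K[X]) (g : R[X]) :
    Commute (p.map (algebraMap K R)) g := by
  induction p using Polynomial.induction_on' with
  | add u v hu hv => rw [Polynomial.map_add]; exact hu.add_left hv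
  | monomial n a =>
    rw [map_monomial, ← C_mul_X_pow_eq_monomial]
    refine .mul_left ?_ ((commute_X g).pow_left n)
    ext1 m
    simp [coeff_C_mul, coeff_mul_C, Algebra.commutes]

theorem isSelfAdjoint_map_algebraMap [StarRing K] [TrivialStar K] [StarRing R] [StarModule K R]
    (p : K[X]) : IsSelfAdjoint (p.map (algebraMap K R)) := by
  ext n
  rw [coeff_star, coeff_map, ← algebraMap_star_comm, star_trivial]

end Algebra

end Polynomial

theorem dvd_star_mul_self_add_mul_iff {A : Type*} [Ring A] [StarRing A] {P : A}
    (hP : IsSelfAdjoint P) (hc : ∀ g, Commute P g) (r Q : A) :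
    P ∣ star (r + P * Q) * (r + P * Q) ↔ P ∣ star r * r := by
  have key : star (r + P * Q) * (r + P * Q) =
      star r * r + P * (star r * Q + star Q * r + star Q * (P * Q)) := by
    have h₁ : star r * (P * Q) = P * (star r * Q) := by rw [← mul_assoc, ← (hc _).eq, mul_assoc]
    have h₂ : star Q * P * r = P * (star Q * r) := by rw [← (hc _).eq, mul_assoc]
    have h₃ : star Q * P * (P * Q) = P * (star Q * (P * Q)) := by rw [← (hc _).eq, mul_assoc]
    rw [star_add, star_mul, hP.star_eq, add_mul, mul_add, mul_add, h₁, h₂, h₃, mul_add, mul_add]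
    abel
  rw [key, dvd_add_left (dvd_mul_right _ _)]

section RealNorm

variable {K R : Type*} [Field K] [NeZero (2 : K)] [Ring R] [StarRing R] [Algebra K R]

theorem exists_algebraMap_eq_of_isSelfAdjoint
    (hreal : ∀ a : R, ∃ k : K, star a * a = algebraMap K R k) {a : R} (ha : IsSelfAdjoint a) :
    ∃ k : K, a = algebraMap K R k := by
  obtain ⟨k₁, hk₁⟩ := hreal (a + 1)
  obtain ⟨k₂, hk₂⟩ := hreal a
  refine ⟨(k₁ - k₂ - 1) / 2, ?_⟩
  have h2a : algebraMap K R 2 * a = algebraMap K R (k₁ - k₂ - 1) := by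
    rw [map_sub, map_sub, map_one, ← hk₁, ← hk₂, star_add, ha.star_eq, star_one, map_ofNat]
    noncomm_ring
  rw [div_eq_inv_mul, map_mul, ← h2a, ← mul_assoc, ← map_mul, inv_mul_cancel₀ two_ne_zero,
    map_one, one_mul]

namespace Polynomial

theorem star_mul_self_mem_lifts
    (hreal : ∀ a : R, ∃ k : K, star a * a = algebraMap K R k) (f : R[X]) :
    star f * f ∈ lifts (algebraMap K R) := by
  rw [lifts_iff_coeff_lifts]
  intro n
  obtain ⟨k, hk⟩ := exists_algebraMap_eq_of_isSelfAdjoint hreal (a := (star f * f).coeff n)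
    (by rw [IsSelfAdjoint, ← coeff_star, (IsSelfAdjoint.star_mul_self f).star_eq])
  exact ⟨k, hk.symm⟩

theorem exists_monic_irreducible_map_dvd_star_mul_self [Nontrivial R]
    (hreal : ∀ a : R, ∃ k : K, star a * a = algebraMap K R k) {f : R[X]} (hf : f.Monic)
    (hdeg : 0 < f.natDegree) :
    ∃ p : K[X], p.Monic ∧ Irreducible p ∧ p.map (algebraMap K R) ∣ star f * f := by
  obtain ⟨N, hN⟩ := (mem_lifts _).1 (star_mul_self_mem_lifts hreal f)
  have hNdeg : N.natDegree = 2 * f.natDegree := by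
    rw [← natDegree_map_eq_of_injective (algebraMap K R).injective, hN, hf.star.natDegree_mul hf,
      natDegree_star, two_mul]
  obtain ⟨p, hpmon, hpirr, hpN⟩ :=
    exists_monic_irreducible_factor N fun hu ↦ by have := natDegree_eq_zero_of_isUnit hu; omega
  exact ⟨p, hpmon, hpirr, hN ▸ Polynomial.map_dvd _ hpN⟩

end Polynomial

end RealNorm

namespace Polynomial

section DivisionRing

variable {D : Type*} [DivisionRing D]

theorem exists_eq_C_mul_X_sub_C_of_natDegree_eq_one {r : D[X]} (hr : r.natDegree = 1) :
    ∃ a b : D, r = C a * (X - C b) := by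
  have ha : r.coeff 1 ≠ 0 := by
    rw [← hr, ← leadingCoeff, leadingCoeff_ne_zero]; rintro rfl; simp at hr
  refine ⟨r.coeff 1, -((r.coeff 1)⁻¹ * r.coeff 0), ?_⟩
  rw [mul_sub, ← C_mul, mul_neg, ← mul_assoc, mul_inv_cancel₀ ha, one_mul, C_neg, sub_neg_eq_add]
  exact eq_X_add_C_of_natDegree_le_one hr.le

theorem exists_add_mul_eq_mul_of_dvd_star_mul_self [StarRing D] {P r : D[X]}
    (hc : ∀ g, Commute P g) (hP : P.Monic) (hr : r ≠ 0) (hdvd : P ∣ star r * r)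
    (hdeg : (star r * r).natDegree ≤ P.natDegree) (Q : D[X]) :
    ∃ W, r + P * Q = W * r := by
  set c := (star r * r).leadingCoeff
  have hc0 : c ≠ 0 := leadingCoeff_ne_zero.2 (mul_ne_zero (star_ne_zero.2 hr) hr)
  have hPrr : P = C c⁻¹ * (star r * r) := by
    rw [eq_mul_leadingCoeff_of_monic_of_dvd_of_natDegree_le hP hdvd hdeg, (hc _).eq,
      ← mul_assoc, ← C_mul, inv_mul_cancel₀ hc0, C_1, one_mul]
  refine ⟨1 + Q * C c⁻¹ * star r, ?_⟩
  rw [(hc Q).eq, hPrr]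
  noncomm_ring

end DivisionRing

theorem exists_eq_mul_X_sub_C_of_not_map_dvd {R : Type*} [DivisionRing R] [Algebra ℝ R]
    [StarRing R] [StarModule ℝ R] (hreal : ∀ a : R, ∃ k : ℝ, star a * a = algebraMap ℝ R k)
    {f : R[X]} (hf : f.Monic) (hdeg : 0 < f.natDegree)
    (hno_factor : ¬ ∃ M : ℝ[X], M.Monic ∧ 1 ≤ M.degree ∧ M.map (algebraMap ℝ R) ∣ f) :
    ∃ (W : R[X]) (h : R), f = W * (X - C h) := by
  obtain ⟨p, hpmon, hpirr, hpdvd⟩ := exists_monic_irreducible_map_dvd_star_mul_self hreal hf hdeg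
  set P := p.map (algebraMap ℝ R)
  have hPmon : P.Monic := hpmon.map _
  have hPdeg : P.natDegree = p.natDegree := hpmon.natDegree_map _
  have hPc : ∀ g, Commute P g := commute_map_algebraMap p
  have hf_eq : f %ₘ P + P * (f /ₘ P) = f := modByMonic_add_div f P
  set r := f %ₘ P
  have hr0 : r ≠ 0 := fun h ↦ hno_factor ⟨p, hpmon, Nat.WithBot.one_le_iff_zero_lt.2 hpirr.degree_pos,
    (modByMonic_eq_zero_iff_dvd hPmon).1 h⟩
  have hrP : r.natDegree < P.natDegree :=
    natDegree_modByMonic_lt f hPmon <| ne_of_apply_ne natDegree <| by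
      rw [hPdeg, natDegree_one]; exact hpirr.natDegree_pos.ne'
  have hdvd : P ∣ star r * r :=
    (dvd_star_mul_self_add_mul_iff (isSelfAdjoint_map_algebraMap p) hPc r _).1 (hf_eq ▸ hpdvd)
  have hrr : (star r * r).natDegree = 2 * r.natDegree := by
    rw [natDegree_mul (star_ne_zero.2 hr0) hr0, natDegree_star, two_mul]
  have hPrr : P.natDegree ≤ (star r * r).natDegree :=
    natDegree_le_of_dvd hdvd (mul_ne_zero (star_ne_zero.2 hr0) hr0)
  have hP2 : P.natDegree ≤ 2 := hPdeg ▸ hpirr.natDegree_le_two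
  obtain ⟨W, hW⟩ := exists_add_mul_eq_mul_of_dvd_star_mul_self hPc hPmon hr0 hdvd (by omega) _
  obtain ⟨a, h, hr⟩ := exists_eq_C_mul_X_sub_C_of_natDegree_eq_one (show r.natDegree = 1 by omega)
  exact ⟨W * C a, h, by rw [← hf_eq, hW, hr, mul_assoc]⟩

end Polynomial

theorem factorization_over_division_algebra_general {R : Type*} [DivisionRing R] [Algebra ℝ R]
    [StarRing R] [StarModule ℝ R]
    (hreal : ∀ a : R, ∃ r : ℝ, star a * a = algebraMap ℝ R r)
    (F : Polynomial R) (n : ℕ) (hdeg : F.natDegree = n) (hmonic : F.Monic)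
    (hmrpf : ¬ ∃ M : Polynomial ℝ, M.Monic ∧ 1 ≤ M.degree ∧
      M.map (algebraMap ℝ R) ∣ F) :
    ∃ h : Fin n → R,
      F = (List.ofFn fun i => X - Polynomial.C (h i)).prod := by
  induction n generalizing F with
  | zero => exact ⟨Fin.elim0, by simp [hmonic.natDegree_eq_zero.1 hdeg]⟩
  | succ n ih =>
    obtain ⟨W, h, hW⟩ := exists_eq_mul_X_sub_C_of_not_map_dvd hreal hmonic (by omega) hmrpf
    have hWmon : W.Monic := (monic_X_sub_C h).of_mul_monic_right (hW ▸ hmonic)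
    have hWdeg : W.natDegree = n := by
      rw [hW, hWmon.natDegree_mul (monic_X_sub_C h), natDegree_X_sub_C] at hdeg
      omega
    obtain ⟨g, hg⟩ := ih W hWdeg hWmon fun ⟨M, hM, hMdeg, hMW⟩ ↦
      hmrpf ⟨M, hM, hMdeg, hW ▸ dvd_mul_of_dvd_left hMW _⟩
    refine ⟨Fin.snoc g h, ?_⟩
    rw [List.ofFn_succ', List.concat_eq_append, List.prod_append]
    simp [hW, hg]

/-- Over a finite-dimensional real division algebra whose involution `star` satisfies
`star a * a = a * star a ∈ ℝ·1`, every monic polynomial of degree `n ≥ 1` without a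
nonconstant monic real polynomial factor splits into `n` monic linear factors. -/
theorem factorization_over_division_algebra {R : Type*} [DivisionRing R] [Algebra ℝ R]
    [FiniteDimensional ℝ R] [StarRing R] [StarModule ℝ R]
    (hcomm : ∀ a : R, star a * a = a * star a)
    (hreal : ∀ a : R, ∃ r : ℝ, star a * a = algebraMap ℝ R r)
    (F : Polynomial R) (n : ℕ) (hn : 1 ≤ n) (hdeg : F.natDegree = n) (hmonic : F.Monic)
    (hmrpf : ¬ ∃ M : Polynomial ℝ, M.Monic ∧ 1 ≤ M.degree ∧
      M.map (algebraMap ℝ R) ∣ F) :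
    ∃ h : Fin n → R,
      F = (List.ofFn fun i => X - Polynomial.C (h i)).prod :=
  factorization_over_division_algebra_general hreal F n hdeg hmonic hmrpf
end

section
/- Let R be a finite-dimensional associative real algebra with identity, equipped with an involution γ (an ℝ-linear anti-automorphism with γ∘γ = id; a star ring and star module structure over ℝ with γ = star) such that γ(a)·a = a·γ(a) ∈ ℝ·1 for all a ∈ R. Let C ∈ R[t] be monic and let M ∈ ℝ[t] be a monic quadratic polynomial dividing the norm polynomial ν(C) = C·γ(C). If S := lrem(C, M) satisfies ν(S) = S·γ(S) ≠ 0, then S has a unique right zero h ∈ R, and t − h is a right factor of C, i.e. C = Q·(t − h) for some Q ∈ R[t]. -/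
/-!
Since `M` is real, hence central and fixed by `γ`, it also divides `ν(S)`; as `deg ν(S) ≤ 2`,
this forces `ν(S) = M · b γ(b)` with `b` the linear coefficient of `S`. Then `b γ(b)` is a nonzero
real, so `b` is invertible and `S = b (t - h)` has the single right zero `h`. Cancelling `b` and
`γ(b)` gives `M = (t - h)(t - γ(h)) = (t - γ(h))(t - h)`, the last step because `h` commutes with
`γ(h)`; hence `F = Q M + S = (Q (t - γ(h)) + b)(t - h)`.
-/

open Polynomial

/-- Coefficientwise application of the involution `star` to a left polynomial. -/
noncomputable def pconj {R : Type*} [Ring R] [StarRing R] (p : Polynomial R) : Polynomial R :=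
  ⟨AddMonoidAlgebra.ofCoeff (Finsupp.mapRange star (star_zero R) p.toFinsupp.coeff)⟩

section pconj

variable {R : Type*} [Ring R] [StarRing R]

theorem pconj_coeff (p : R[X]) (n : ℕ) : (pconj p).coeff n = star (p.coeff n) := rfl

theorem pconj_add (p q : R[X]) : pconj (p + q) = pconj p + pconj q := by
  ext n; simp only [pconj_coeff, coeff_add, star_add]

theorem pconj_mul (p q : R[X]) : pconj (p * q) = pconj q * pconj p := by
  ext n
  rw [pconj_coeff, coeff_mul, coeff_mul, ← Finset.HasAntidiagonal.map_swap_antidiagonal,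
    Finset.sum_map]
  simp [pconj_coeff, star_sum, star_mul]

theorem pconj_C (a : R) : pconj (C a) = C (star a) := by
  ext n; simp [pconj_coeff, coeff_C, apply_ite star]

theorem pconj_X_sub_C (a : R) : pconj (X - C a) = X - C (star a) := by
  ext n; simp [pconj_coeff, coeff_X, coeff_C, apply_ite star]

theorem natDegree_pconj_le (p : R[X]) : (pconj p).natDegree ≤ p.natDegree :=
  natDegree_le_iff_coeff_eq_zero.mpr fun _ hn => by
    rw [pconj_coeff, coeff_eq_zero_of_natDegree_lt hn, star_zero]

theorem pconj_X_sub_C_mul_self {a : R} (ha : star a * a = a * star a) :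
    pconj (X - C a) * (X - C a) = (X - C a) * pconj (X - C a) := by
  rw [pconj_X_sub_C]
  have hX : ∀ c : R, X * C c = C c * X := fun c => (commute_X (C c)).eq
  simp only [sub_mul, mul_sub, hX, ← C_mul, ha]
  abel

theorem pconj_map_algebraMap {K : Type*} [CommSemiring K] [StarRing K] [TrivialStar K]
    [Algebra K R] [StarModule K R] (M : K[X]) :
    pconj (M.map (algebraMap K R)) = M.map (algebraMap K R) := by
  ext n
  rw [pconj_coeff, coeff_map, ← algebraMap_star_comm, star_trivial]

theorem dvd_mul_pconj_of_dvd_of_eq_mul_add {P F Q S : R[X]} (hPc : ∀ p, Commute P p)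
    (hP : pconj P = P) (hdvd : P ∣ F * pconj F) (hF : F = Q * P + S) :
    P ∣ S * pconj S := by
  subst hF
  have hexp : (Q * P + S) * pconj (Q * P + S)
      = P * (Q * pconj (Q * P + S) + S * pconj Q) + S * pconj S := by
    rw [mul_add P, ← mul_assoc P Q, ← mul_assoc P S, (hPc Q).eq, (hPc S).eq, pconj_add,
      pconj_mul, hP]
    noncomm_ring
  rw [hexp] at hdvd
  exact (dvd_add_right (dvd_mul_right _ _)).mp hdvd

end pconj

namespace Polynomial

theorem commute_map_algebraMap_s4 {K A : Type*} [CommSemiring K] [Semiring A] [Algebra K A]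
    (M : K[X]) (p : A[X]) : Commute (M.map (algebraMap K A)) p := by
  induction M using Polynomial.induction_on' with
  | add M N hM hN => rw [Polynomial.map_add]; exact hM.add_left hN
  | monomial n c =>
    rw [map_monomial, ← C_mul_X_pow_eq_monomial, ← algebraMap_apply]
    exact (Algebra.commute_algebraMap_left c p).mul_left ((commute_X p).pow_left n)

theorem eq_mul_C_coeff_of_monic_dvd {R : Type*} [Semiring R] {P G : R[X]} (hP : P.Monic)
    (hdvd : P ∣ G) (hG : G.natDegree ≤ P.natDegree) : G = P * C (G.coeff P.natDegree) := by
  obtain ⟨D, rfl⟩ := hdvd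
  rcases eq_or_ne D 0 with rfl | hD
  · simp
  have hD0 : D.natDegree = 0 := by
    have := hP.natDegree_mul' hD
    omega
  rw [eq_C_of_natDegree_eq_zero hD0, coeff_mul_C, hP.coeff_natDegree, one_mul]

section Linear

variable {R : Type*} [Ring R] {p : R[X]}

theorem eval_of_degree_le_one (hp : p.degree ≤ 1) (x : R) :
    p.eval x = p.coeff 1 * x + p.coeff 0 := by
  conv_lhs => rw [eq_X_add_C_of_degree_le_one hp]
  simp

theorem existsUnique_eval_eq_zero_of_degree_le_one (hp : p.degree ≤ 1)
    (hu : IsUnit (p.coeff 1)) : ∃! x : R, p.eval x = 0 := by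
  obtain ⟨b, hb⟩ := hu
  simp only [eval_of_degree_le_one hp, ← hb]
  refine ⟨-(↑b⁻¹ * p.coeff 0), by simp [← mul_assoc], fun x hx => ?_⟩
  rw [← Units.inv_mul_cancel_left b x, eq_neg_of_add_eq_zero_left hx, mul_neg]

theorem eq_C_mul_X_sub_C_of_degree_le_one (hp : p.degree ≤ 1) {x : R} (hx : p.eval x = 0) :
    p = C (p.coeff 1) * (X - C x) := by
  rw [eval_of_degree_le_one hp, add_eq_zero_iff_eq_neg'] at hx
  conv_lhs => rw [eq_X_add_C_of_degree_le_one hp]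
  rw [hx, C_neg, ← sub_eq_add_neg, C_mul, mul_sub]

end Linear

end Polynomial

theorem isUnit_of_mul_eq_algebraMap {K A : Type*} [Field K] [Ring A] [Algebra K A] {b c : A}
    {r : K} (hr : r ≠ 0) (hbc : b * c = algebraMap K A r) (hcb : c * b = algebraMap K A r) :
    IsUnit b :=
  ⟨⟨b, r⁻¹ • c,
    by rw [mul_smul_comm, hbc, Algebra.smul_def, ← map_mul, inv_mul_cancel₀ hr, map_one],
    by rw [smul_mul_assoc, hcb, Algebra.smul_def, ← map_mul, inv_mul_cancel₀ hr, map_one]⟩, rfl⟩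

theorem mul_pconj_eq_mul_C_of_monic_dvd {R : Type*} [Ring R] [StarRing R] {P S : R[X]}
    (hP : P.Monic) (hP2 : P.natDegree = 2) (hS : S.natDegree ≤ 1) (hdvd : P ∣ S * pconj S) :
    S * pconj S = P * C (S.coeff 1 * star (S.coeff 1)) := by
  have hS' : (pconj S).natDegree ≤ 1 := (natDegree_pconj_le S).trans hS
  have hdeg : (S * pconj S).natDegree ≤ P.natDegree :=
    hP2 ▸ natDegree_mul_le.trans (add_le_add hS hS')
  rw [eq_mul_C_coeff_of_monic_dvd hP hdvd hdeg, hP2]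
  exact congrArg (P * C ·) (coeff_mul_add_eq_of_natDegree_le hS hS')

theorem lemma_right_factor_from_quadratic_factor_general {R : Type*} [Ring R] [Algebra ℝ R]
    [StarRing R] [StarModule ℝ R]
    (hcomm : ∀ a : R, star a * a = a * star a)
    (hreal : ∀ a : R, ∃ r : ℝ, star a * a = algebraMap ℝ R r)
    (F Q S : Polynomial R) (M : Polynomial ℝ)
    (hM : M.Monic) (hMdeg : M.degree = 2)
    (hdvd : M.map (algebraMap ℝ R) ∣ F * pconj F)
    (hrem : F = Q * M.map (algebraMap ℝ R) + S) (hSdeg : S.degree < 2)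
    (hnu : S * pconj S ≠ 0) :
    (∃! h : R, S.eval h = 0) ∧
      ∀ h : R, S.eval h = 0 → ∃ Q' : Polynomial R, F = Q' * (X - Polynomial.C h) := by
  have : Nontrivial R := nontrivial_iff.mp (nontrivial_of_ne _ _ hnu)
  set m := M.map (algebraMap ℝ R)
  set b := S.coeff 1
  have hS1 : S.degree ≤ 1 := Order.le_of_lt_succ hSdeg
  have hnorm : S * pconj S = m * C (b * star b) :=
    mul_pconj_eq_mul_C_of_monic_dvd (hM.map _)
      (by rw [hM.natDegree_map, natDegree_eq_of_degree_eq_some hMdeg])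
      (natDegree_le_of_degree_le hS1)
      (dvd_mul_pconj_of_dvd_of_eq_mul_add (commute_map_algebraMap_s4 M) (pconj_map_algebraMap M)
        hdvd hrem)
  obtain ⟨r, hr⟩ := hreal b
  have hr0 : r ≠ 0 := by
    rintro rfl
    rw [hcomm, map_zero] at hr
    exact hnu (by rw [hnorm, hr, C_0, mul_zero])
  have hb : IsUnit b := isUnit_of_mul_eq_algebraMap hr0 (by rw [← hcomm, hr]) hr
  refine ⟨existsUnique_eval_eq_zero_of_degree_le_one hS1 hb, fun h hh => ?_⟩
  have hSh : S = C b * (X - C h) := eq_C_mul_X_sub_C_of_degree_le_one hS1 hh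
  have hmh : m = pconj (X - C h) * (X - C h) := by
    rw [pconj_X_sub_C_mul_self (hcomm h)]
    refine ((isUnit_C.mpr hb).mul_left_cancel ((isUnit_C.mpr hb.star).mul_right_cancel ?_)).symm
    calc C b * ((X - C h) * pconj (X - C h)) * C (star b) = S * pconj S := by
          rw [hSh, pconj_mul, pconj_C, mul_assoc, mul_assoc, mul_assoc]
      _ = m * C (b * star b) := hnorm
      _ = C b * m * C (star b) := by
          rw [C_mul, ← mul_assoc, (commute_map_algebraMap_s4 M (C b)).eq]
  exact ⟨Q * pconj (X - C h) + C b, by rw [hrem, hmh, hSh, add_mul, mul_assoc]⟩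

/-- If `M` is a monic quadratic real factor of the norm polynomial `ν(F) = F · γ(F)` and the
left remainder `S = lrem(F, M)` has nonzero norm, then `S` has a unique right zero `h` and
`t - h` is a right factor of `F`. -/
theorem lemma_right_factor_from_quadratic_factor {R : Type*} [Ring R] [Algebra ℝ R]
    [FiniteDimensional ℝ R] [StarRing R] [StarModule ℝ R]
    (hcomm : ∀ a : R, star a * a = a * star a)
    (hreal : ∀ a : R, ∃ r : ℝ, star a * a = algebraMap ℝ R r)
    (F Q S : Polynomial R) (M : Polynomial ℝ)
    (hF : F.Monic) (hM : M.Monic) (hMdeg : M.degree = 2)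
    (hdvd : M.map (algebraMap ℝ R) ∣ F * pconj F)
    (hrem : F = Q * M.map (algebraMap ℝ R) + S) (hSdeg : S.degree < 2)
    (hnu : S * pconj S ≠ 0) :
    (∃! h : R, S.eval h = 0) ∧
      ∀ h : R, S.eval h = 0 → ∃ Q' : Polynomial R, F = Q' * (X - Polynomial.C h) :=
  lemma_right_factor_from_quadratic_factor_general hcomm hreal F Q S M hM hMdeg hdvd hrem hSdeg hnu
end

section
/- Let C = c₂t² + c₁t + c₀ be a quadratic polynomial over the split quaternions 𝕊 such that c₂ is invertible (N(c₂) ≠ 0) and c₀, c₁, c₂ are linearly independent over ℝ. Then C admits a factorization C = c₂(t − h₁)(t − h₂) with h₁, h₂ ∈ 𝕊. -/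
open Polynomial Quaternion

/-- The split quaternions: `𝐢² = 𝐣² = 1`, `𝐤 = 𝐢𝐣`, `𝐤² = -1`. -/
abbrev SplitQuat : Type := QuaternionAlgebra ℝ 1 0 1

/-!
With `p = c₂⁻¹c₁` and `q = c₂⁻¹c₀` it suffices to find a right root `h` of `X² + pX + q`, since
then `C = c₂(X + p + h)(X - h)`. The norm polynomial `(X² + pX + q)(X² + p̄X + q̄)` is a real
quartic, so it has a real quadratic factor `X² - τX + δ`. With `g = p + τ` and `z = δ - q`, every
`h` with `gh = z`, `2 Re h = τ` and `N(h) = δ` is a root, because then `h² = τh - δ`.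
If `N(g) ≠ 0`, the divisibility makes `h = g⁻¹z` such a solution. If `N(g) = 0`, it makes `g` and
`z` null and orthogonal, whence `ḡz = 0` or `gz̄ = 0`; the second case turns into the first under
`(g, z) ↦ (-ḡ, -z̄)`. When `ḡz = 0`, the solutions of `gh = z` include `ūz + ḡy` for every `y`,
once `2 Re(gū) = 1`. On this family the trace and the norm are affine in `y`, with linear parts
`Re(ḡy)` and `Re(z̄y)`, and these are independent because `1, p, q` are linearly independent.
-/

/-- Coefficientwise, `X⁴ + a₃X³ + a₂X² + a₁X + a₀ = (X² - τX + δ)(X² - τ'X + δ')`. -/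
theorem Real.exists_quartic_factorization (a₃ a₂ a₁ a₀ : ℝ) :
    ∃ τ δ τ' δ' : ℝ, τ + τ' = -a₃ ∧ δ + δ' + τ * τ' = a₂ ∧ τ * δ' + τ' * δ = -a₁ ∧
      δ * δ' = a₀ := by
  have hf : IsMonicOfDegree (X ^ 4 + C a₃ * X ^ 3 + C a₂ * X ^ 2 + C a₁ * X + C a₀) (2 + 2) := by
    simp only [add_assoc]
    refine (isMonicOfDegree_X_pow ℝ 4).add_right (lt_of_le_of_lt ?_ (by norm_num : 3 < 4))
    simpa only [add_assoc] using natDegree_cubic_le (a := a₃) (b := a₂) (c := a₁) (d := a₀)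
  obtain ⟨f₁, f₂, hf₁, hf₂, hf⟩ := hf.eq_isMonicOfDegree_two_mul_isMonicOfDegree
  obtain ⟨τ, δ, rfl⟩ := isMonicOfDegree_two_iff'.mp hf₁
  obtain ⟨τ', δ', rfl⟩ := isMonicOfDegree_two_iff'.mp hf₂
  have hexp : X ^ 4 + C a₃ * X ^ 3 + C a₂ * X ^ 2 + C a₁ * X + C a₀ =
      X ^ 4 + C (-(τ + τ')) * X ^ 3 + C (δ + δ' + τ * τ') * X ^ 2 +
        C (-(τ * δ' + τ' * δ)) * X + C (δ * δ') := by
    rw [hf]; simp only [map_add, map_neg, map_mul]; ring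
  have hcoeff (k : ℕ) := congrArg (coeff · k) hexp
  simp only [coeff_add, coeff_C_mul, coeff_X_pow, coeff_X, coeff_C] at hcoeff
  have h₃ := hcoeff 3
  have h₂ := hcoeff 2
  have h₁ := hcoeff 1
  have h₀ := hcoeff 0
  norm_num at h₃ h₂ h₁ h₀
  exact ⟨τ, δ, τ', δ', by linarith, by linarith, by linarith, by linarith⟩

lemma Polynomial.X_sq_add_C_mul_X_add_C_eq_of_root {R : Type*} [Ring R] {p q h : R}
    (hh : h * h + p * h + q = 0) :
    (X ^ 2 + C p * X + C q : R[X]) = (X - C (-p - h)) * (X - C h) := by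
  have hq : q = (-p - h) * h := by
    rw [← sub_eq_zero, ← hh]; noncomm_ring
  rw [hq]
  simp only [C_mul, map_sub, map_neg, sub_mul, mul_sub, X_mul_C]
  noncomm_ring

namespace SplitQuat

def normSq (x : SplitQuat) : ℝ := x.re ^ 2 - x.imI ^ 2 - x.imJ ^ 2 + x.imK ^ 2

lemma mul_star_eq (x : SplitQuat) : x * star x = normSq x := by
  ext <;> simp [normSq, -QuaternionAlgebra.coe_pow] <;> ring

lemma self_add_star_eq (x : SplitQuat) : x + star x = ↑(2 * x.re) := by
  ext <;> simp [QuaternionAlgebra.re_ofNat, QuaternionAlgebra.imI_ofNat,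
    QuaternionAlgebra.imJ_ofNat, QuaternionAlgebra.imK_ofNat]; ring

lemma star_eq (x : SplitQuat) : star x = ↑(2 * x.re) - x :=
  eq_sub_of_add_eq' (self_add_star_eq x)

lemma mul_self_eq (x : SplitQuat) : x * x = ↑(2 * x.re) * x - ↑(normSq x) := by
  ext <;> simp [normSq, -QuaternionAlgebra.coe_pow, QuaternionAlgebra.re_ofNat,
    QuaternionAlgebra.imI_ofNat, QuaternionAlgebra.imJ_ofNat, QuaternionAlgebra.imK_ofNat] <;> ring

lemma mul_mul_self_eq (x y : SplitQuat) :
    x * y * x = ↑(2 * (y * x).re) * x - ↑(normSq x) * star y := by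
  ext <;> simp [normSq, -QuaternionAlgebra.coe_pow, QuaternionAlgebra.re_ofNat,
    QuaternionAlgebra.imI_ofNat, QuaternionAlgebra.imJ_ofNat, QuaternionAlgebra.imK_ofNat] <;> ring

lemma normSq_mul (x y : SplitQuat) : normSq (x * y) = normSq x * normSq y := by
  simp [normSq]; ring

lemma normSq_star (x : SplitQuat) : normSq (star x) = normSq x := by
  simp [normSq]

lemma normSq_neg (x : SplitQuat) : normSq (-x) = normSq x := by
  simp [normSq]

lemma normSq_smul (r : ℝ) (x : SplitQuat) : normSq (r • x) = r ^ 2 * normSq x := by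
  simp [normSq]; ring

lemma normSq_add (x y : SplitQuat) :
    normSq (x + y) = normSq x + normSq y + 2 * (x * star y).re := by
  simp [normSq]; ring

lemma re_mul_comm (x y : SplitQuat) : (x * y).re = (y * x).re := by
  simp; ring

lemma re_mul_star_comm (x y : SplitQuat) : (x * star y).re = (star x * y).re := by
  simp

lemma mul_self_add_mul_add_eq_zero {p q h : SplitQuat} {τ δ : ℝ}
    (hlin : (p + τ) * h = δ - q) (hτ : 2 * h.re = τ) (hδ : normSq h = δ) :
    h * h + p * h + q = 0 := by
  have hp : p * h = δ - q - τ * h := by rw [← hlin, add_mul]; abel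
  rw [mul_self_eq, hτ, hδ, hp]; abel

lemma eq_zero_of_forall_re_mul_eq_zero {x : SplitQuat} (h : ∀ y, (x * y).re = 0) : x = 0 := by
  ext
  · simpa using h 1
  · simpa using h ⟨0, 1, 0, 0⟩
  · simpa using h ⟨0, 0, 1, 0⟩
  · simpa using h ⟨0, 0, 0, 1⟩

lemma exists_re_star_mul_eq {a b : SplitQuat} (hab : LinearIndependent ℝ ![a, b]) (α β : ℝ) :
    ∃ y, (star a * y).re = α ∧ (star b * y).re = β := by
  let L : SplitQuat →ₗ[ℝ] ℝ × ℝ :=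
    (QuaternionAlgebra.reₗ 1 0 1 ∘ₗ LinearMap.mulLeft ℝ (star a)).prod
      (QuaternionAlgebra.reₗ 1 0 1 ∘ₗ LinearMap.mulLeft ℝ (star b))
  have hL : Function.Surjective L := by
    rw [← LinearMap.dualMap_injective_iff, injective_iff_map_eq_zero]
    intro φ hφ
    have hcomb : φ (1, 0) • a + φ (0, 1) • b = 0 := by
      rw [← star_eq_zero]
      refine eq_zero_of_forall_re_mul_eq_zero fun y => ?_
      have hy := LinearMap.congr_fun hφ y
      have hsplit : L y = (star a * y).re • ((1 : ℝ), (0 : ℝ)) + (star b * y).re • (0, 1) := by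
        ext <;> simp [L]
      simp only [LinearMap.dualMap_apply, LinearMap.zero_apply, hsplit, map_add, map_smul,
        smul_eq_mul] at hy
      simp only [star_add, QuaternionAlgebra.star_smul, add_mul, smul_mul_assoc,
        QuaternionAlgebra.re_add, QuaternionAlgebra.re_smul, smul_eq_mul]
      linarith
    obtain ⟨h₁, h₂⟩ := LinearIndependent.pair_iff.mp hab _ _ hcomb
    ext <;> simp [h₁, h₂]
  obtain ⟨y, hy⟩ := hL (α, β)
  exact ⟨y, congrArg Prod.fst hy, congrArg Prod.snd hy⟩

lemma exists_mul_eq_of_normSq_ne_zero {g z : SplitQuat} {τ δ : ℝ} (hg : normSq g ≠ 0)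
    (hτ : 2 * (star g * z).re = τ * normSq g) (hδ : normSq z = δ * normSq g) :
    ∃ h, g * h = z ∧ 2 * h.re = τ ∧ normSq h = δ := by
  refine ⟨(normSq g)⁻¹ • (star g * z), ?_, ?_, ?_⟩
  · rw [mul_smul_comm, ← mul_assoc, mul_star_eq, QuaternionAlgebra.coe_mul_eq_smul, smul_smul,
      inv_mul_cancel₀ hg, one_smul]
  · rw [QuaternionAlgebra.re_smul, smul_eq_mul, mul_left_comm, hτ]
    field_simp
  · rw [normSq_smul, normSq_mul, normSq_star, hδ]
    field_simp

lemma exists_mul_eq_of_star_mul_eq_zero {g z : SplitQuat} (hg : normSq g = 0)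
    (hgz : star g * z = 0) (hli : LinearIndependent ℝ ![g, z]) (τ δ : ℝ) :
    ∃ h, g * h = z ∧ 2 * h.re = τ ∧ normSq h = δ := by
  obtain ⟨u, hu, -⟩ := exists_re_star_mul_eq hli (1 / 2) 0
  obtain ⟨y, hy₁, hy₂⟩ := exists_re_star_mul_eq hli ((τ - 2 * (star u * z).re) / 2)
    ((δ - normSq u * normSq z) / 2)
  have hguz : g * star u * z = z := by
    have hre : 2 * (g * star u).re = 1 := by rw [re_mul_star_comm, hu]; norm_num
    calc g * star u * z = (g * star u + star (g * star u)) * z - u * (star g * z) := by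
          rw [star_mul, star_star]; noncomm_ring
      _ = z := by rw [self_add_star_eq, hre, hgz]; simp
  refine ⟨star u * z + star g * y, ?_, ?_, ?_⟩
  · rw [mul_add, ← mul_assoc, hguz, ← mul_assoc, mul_star_eq, hg]; simp
  · rw [QuaternionAlgebra.re_add, hy₁]; ring
  · rw [normSq_add, normSq_mul, normSq_mul, normSq_star, normSq_star, hg, star_mul, star_star,
      ← mul_assoc, re_mul_comm _ g, ← mul_assoc, ← mul_assoc, hguz, re_mul_star_comm, hy₂]
    ring

lemma star_mul_eq_zero_or_mul_star_eq_zero {v w : SplitQuat} (hv : normSq v = 0)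
    (hw : normSq w = 0) (hvw : (v * star w).re = 0) : star v * w = 0 ∨ v * star w = 0 := by
  by_contra! h
  obtain ⟨x, hx⟩ : ∃ x, (star v * w * x).re ≠ 0 := by
    by_contra! H
    exact h.1 (eq_zero_of_forall_re_mul_eq_zero H)
  have key : (2 * (star v * w * x).re) • (v * star w) = 0 := calc
    _ = v * (star v * w * x + star (star v * w * x)) * star w := by
      rw [self_add_star_eq, ← QuaternionAlgebra.coe_mul_eq_smul, mul_assoc,
        ← QuaternionAlgebra.coe_commutes, mul_assoc]
    _ = ↑(normSq v) * (w * x * star w) + v * star x * (star w * v * star w) := by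
      simp only [star_mul, star_star, ← mul_star_eq]; noncomm_ring
    _ = 0 := by rw [mul_mul_self_eq, hvw, hv, normSq_star, hw]; simp
  exact h.2 ((smul_eq_zero.mp key).resolve_left (by simpa using hx))

lemma coe_eq_smul_one (r : ℝ) : (r : SplitQuat) = r • 1 := by
  rw [← QuaternionAlgebra.coe_mul_eq_smul, mul_one]

lemma linearIndependent_add_coe_coe_sub {p q : SplitQuat} (hli : LinearIndependent ℝ ![q, p, 1])
    (τ δ : ℝ) : LinearIndependent ℝ ![p + τ, δ - q] := by
  refine LinearIndependent.pair_iff.mpr fun s t hst => ?_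
  have hcomb := Fintype.linearIndependent_iff.mp hli ![-t, s, s * τ + t * δ] (by
    simp only [Fin.sum_univ_three, Matrix.cons_val_zero, Matrix.cons_val_one, Matrix.cons_val_two,
      Matrix.head_cons, Matrix.tail_cons]
    rw [← hst, coe_eq_smul_one, coe_eq_smul_one]
    module)
  exact ⟨by simpa using hcomb 1, by simpa using hcomb 0⟩

/-- Consequences of `X² - τX + δ` dividing the norm polynomial
`X⁴ + 2 Re(p) X³ + (N(p) + 2 Re(q)) X² + 2 Re(p q̄) X + N(q)` of `X² + pX + q`. -/
lemma exists_real_quadratic_factor (p q : SplitQuat) :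
    ∃ τ δ : ℝ, 2 * (star (p + τ) * (δ - q)).re = τ * normSq (p + τ) ∧
      normSq (δ - q) = δ * normSq (p + τ) := by
  obtain ⟨τ, δ, τ', δ', e₃, e₂, e₁, e₀⟩ := Real.exists_quartic_factorization (2 * p.re)
    (normSq p + 2 * q.re) (2 * (p * star q).re) (normSq q)
  have hg : normSq (p + τ) = normSq p + 2 * τ * p.re + τ ^ 2 := by simp [normSq]; ring
  have hz : normSq (δ - q) = δ ^ 2 - 2 * δ * q.re + normSq q := by simp [normSq]; ring
  have hgz : (star (p + τ) * (δ - q)).re = δ * p.re - (p * star q).re + τ * δ - τ * q.re := by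
    simp; ring
  refine ⟨τ, δ, ?_, ?_⟩
  · rw [hgz, hg]; linear_combination τ * e₂ + (δ - τ ^ 2) * e₃ - e₁
  · rw [hz, hg]; linear_combination δ * e₂ - δ * τ * e₃ - e₀

theorem exists_mul_self_add_mul_add_eq_zero {p q : SplitQuat}
    (hli : LinearIndependent ℝ ![q, p, 1]) : ∃ h, h * h + p * h + q = 0 := by
  suffices ∃ τ δ : ℝ, ∃ h, (p + τ) * h = δ - q ∧ 2 * h.re = τ ∧ normSq h = δ by
    obtain ⟨τ, δ, h, hlin, hτ, hδ⟩ := this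
    exact ⟨h, mul_self_add_mul_add_eq_zero hlin hτ hδ⟩
  obtain ⟨τ, δ, hτ, hδ⟩ := exists_real_quadratic_factor p q
  by_cases hg : normSq (p + τ) = 0
  · rw [hg, mul_zero] at hτ hδ
    rcases star_mul_eq_zero_or_mul_star_eq_zero hg hδ (by rw [re_mul_star_comm]; linarith)
      with h | h
    · exact ⟨τ, δ, exists_mul_eq_of_star_mul_eq_zero hg h
        (linearIndependent_add_coe_coe_sub hli τ δ) τ δ⟩
    · set τ' := τ - 2 * (p + τ).re
      set δ' := δ - 2 * ((δ : SplitQuat) - q).re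
      have hg' : p + τ' = -star (p + τ) := by
        rw [star_eq, QuaternionAlgebra.coe_sub]; abel
      have hz' : δ' - q = -star (δ - q) := by
        rw [star_eq, QuaternionAlgebra.coe_sub]; abel
      refine ⟨τ', δ', exists_mul_eq_of_star_mul_eq_zero ?_ ?_
        (linearIndependent_add_coe_coe_sub hli τ' δ') τ' δ'⟩
      · rw [hg', normSq_neg, normSq_star, hg]
      · rw [hg', hz', star_neg, star_star, neg_mul_neg, h]
  · exact ⟨τ, δ, exists_mul_eq_of_normSq_ne_zero hg hτ hδ⟩

end SplitQuat

/-- A quadratic split quaternion polynomial with invertible leading coefficient and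
linearly independent coefficients admits a factorization into linear factors. -/
theorem quadratic_split_quaternion_factorization (c₀ c₁ c₂ : SplitQuat)
    (hc₂ : IsUnit c₂) (hli : LinearIndependent ℝ ![c₀, c₁, c₂]) :
    ∃ h₁ h₂ : SplitQuat,
      (Polynomial.C c₂ * X ^ 2 + Polynomial.C c₁ * X + Polynomial.C c₀ : Polynomial SplitQuat)
        = Polynomial.C c₂ * (X - Polynomial.C h₁) * (X - Polynomial.C h₂) := by
  obtain ⟨u, rfl⟩ := hc₂
  have hli' : LinearIndependent ℝ ![↑u⁻¹ * c₀, ↑u⁻¹ * c₁, 1] := by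
    have hmap : ![↑u⁻¹ * c₀, ↑u⁻¹ * c₁, 1] =
        LinearMap.mulLeft ℝ (↑u⁻¹ : SplitQuat) ∘ ![c₀, c₁, ↑u] := by
      funext i; fin_cases i <;> simp
    rw [hmap]
    exact hli.map' _ (LinearMap.ker_eq_bot.mpr u⁻¹.isUnit.mul_right_injective)
  obtain ⟨h, hh⟩ := SplitQuat.exists_mul_self_add_mul_add_eq_zero hli'
  refine ⟨-(↑u⁻¹ * c₁) - h, h, ?_⟩
  rw [mul_assoc, ← X_sq_add_C_mul_X_add_C_eq_of_root hh]
  simp only [mul_add, ← mul_assoc, ← C_mul, Units.mul_inv, one_mul]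
end

section
/- There is no split quaternion h ∈ 𝕊 with h² + 2𝐢 = 0; consequently, there are no h₁, h₂ ∈ 𝕊 such that t² + 2𝐢 = (t − h₁)(t − h₂) in 𝕊[t], i.e. the monic quadratic split quaternion polynomial t² + 2𝐢 admits no factorization into linear factors. -/
/-!
Write `h = a + b𝐢 + c𝐣 + d𝐤`. Since `𝐢, 𝐣, 𝐤` anticommute, `h² = (a² + b² + c² - d²) + 2a(b𝐢 + c𝐣 + d𝐤)`.
Comparing with `-2𝐢` gives `ab = -1`, so `a ≠ 0`, hence `c = d = 0` and then `a² + b² = 0`, which is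
impossible over `ℝ`. A factorization `(t - h₁)(t - h₂)` would make `h₂` a right zero, because
evaluation at `h₂` kills every left multiple of `t - h₂`.
-/

open Polynomial Quaternion

/-- The split quaternion unit `𝐢`. -/
def si : SplitQuat := ⟨0, 1, 0, 0⟩

theorem Polynomial.sq_add_eq_zero_of_X_sq_add_C_eq {R : Type*} [Ring R] {a b c : R}
    (h : (X ^ 2 + C c : R[X]) = (X - C a) * (X - C b)) : b ^ 2 + c = 0 := by
  simpa [eval_mul_X_sub_C, eval_X_pow] using congrArg (eval b) h

namespace QuaternionAlgebra

variable {R : Type*} [CommRing R] {c₁ c₃ : R} (h : ℍ[R,c₁,0,c₃])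

theorem re_sq : (h ^ 2).re = h.re ^ 2 + c₁ * h.imI ^ 2 + c₃ * h.imJ ^ 2 - c₁ * c₃ * h.imK ^ 2 := by
  simp only [sq, re_mul]; ring

theorem imI_sq : (h ^ 2).imI = 2 * h.re * h.imI := by
  simp only [sq, imI_mul]; ring

theorem imJ_sq : (h ^ 2).imJ = 2 * h.re * h.imJ := by
  simp only [sq, imJ_mul]; ring

theorem imK_sq : (h ^ 2).imK = 2 * h.re * h.imK := by
  simp only [sq, imK_mul]; ring

end QuaternionAlgebra

theorem SplitQuat.sq_ne_smul_si {r : ℝ} (hr : r ≠ 0) (h : SplitQuat) : h ^ 2 ≠ r • si := by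
  intro hsq
  have hre : (h ^ 2).re = (r • si).re := by rw [hsq]
  have hI : (h ^ 2).imI = (r • si).imI := by rw [hsq]
  have hJ : (h ^ 2).imJ = (r • si).imJ := by rw [hsq]
  have hK : (h ^ 2).imK = (r • si).imK := by rw [hsq]
  simp only [QuaternionAlgebra.re_sq, QuaternionAlgebra.imI_sq, QuaternionAlgebra.imJ_sq,
    QuaternionAlgebra.imK_sq, QuaternionAlgebra.re_smul, QuaternionAlgebra.imI_smul,
    QuaternionAlgebra.imJ_smul, QuaternionAlgebra.imK_smul, si, smul_eq_mul, mul_zero, mul_one,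
    one_mul] at hre hI hJ hK
  have h_re_ne : h.re ≠ 0 := by
    rintro h0
    rw [h0, mul_zero, zero_mul] at hI
    exact hr hI.symm
  have hJ0 : h.imJ = 0 := by simpa [h_re_ne] using hJ
  have hK0 : h.imK = 0 := by simpa [h_re_ne] using hK
  rw [hJ0, hK0] at hre
  exact h_re_ne (pow_eq_zero_iff two_ne_zero |>.mp (by nlinarith [sq_nonneg h.imI]))

theorem SplitQuat.sq_add_two_mul_si_ne_zero (h : SplitQuat) : h ^ 2 + 2 * si ≠ 0 := by
  intro hh
  refine h.sq_ne_smul_si (r := -2) (by norm_num) ?_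
  rw [eq_neg_of_add_eq_zero_left hh, neg_smul, two_smul, two_mul]

/-- The split quaternion polynomial `t² + 2𝐢` has no right zero and hence admits no
factorization into linear factors. -/
theorem no_factorization_split_quadratic :
    (¬ ∃ h : SplitQuat, h ^ 2 + 2 * si = 0) ∧
    ¬ ∃ h₁ h₂ : SplitQuat,
      (X ^ 2 + Polynomial.C (2 * si) : Polynomial SplitQuat)
        = (X - Polynomial.C h₁) * (X - Polynomial.C h₂) := by
  refine ⟨fun ⟨h, hh⟩ => h.sq_add_two_mul_si_ne_zero hh, ?_⟩
  rintro ⟨h₁, h₂, hfac⟩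
  exact h₂.sq_add_two_mul_si_ne_zero (sq_add_eq_zero_of_X_sq_add_C_eq hfac)
end

section
/- There are no dual quaternions h₁, h₂ ∈ 𝔻ℍ such that t² + ε = (t − h₁)(t − h₂) in 𝔻ℍ[t]; equivalently, there is no h ∈ 𝔻ℍ with h² + ε = 0, so the monic polynomial t² + ε ∈ 𝔻ℍ[t] admits no factorization into linear factors. -/
open Polynomial DualNumber

abbrev DH : Type := DualNumber (Quaternion ℝ)

/-- The primal part of a square root of `-ε` is nilpotent, hence zero; the dual part then
forces `1 = 0`. -/
theorem DualNumber.sq_add_eps_ne_zero {R : Type*} [Ring R] [IsReduced R] [Nontrivial R]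
    (h : R[ε]) : h ^ 2 + ε ≠ 0 := by
  intro hroot
  have hfst : h.fst ^ 2 = 0 := by simpa using congrArg TrivSqZeroExt.fst hroot
  have hsnd : h.fst * h.snd + h.snd * h.fst + 1 = 0 := by
    simpa [sq, TrivSqZeroExt.snd_mul] using congrArg TrivSqZeroExt.snd hroot
  rw [IsReduced.eq_zero _ ⟨2, hfst⟩] at hsnd
  simp at hsnd

/-- A right factor `X - C r` makes `r` a right zero, even over a noncommutative ring. -/
theorem Polynomial.sq_add_eq_zero_of_X_sq_add_C_eq_mul_X_sub_C {R : Type*} [Ring R]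
    {c r : R} {q : R[X]} (hfac : X ^ 2 + C c = q * (X - C r)) : r ^ 2 + c = 0 := by
  simpa [eval_mul_X_sub_C, eval_X_pow] using congrArg (eval r) hfac

/-- The dual quaternion polynomial `t² + ε` admits no factorization into linear factors:
there is no `h` with `h² + ε = 0`. -/
theorem no_factorization_t_sq_add_eps :
    (¬ ∃ h₁ h₂ : DH,
      (X ^ 2 + Polynomial.C (ε : DH) : Polynomial DH)
        = (X - Polynomial.C h₁) * (X - Polynomial.C h₂)) ∧
    ¬ ∃ h : DH, h ^ 2 + ε = 0 := by
  constructor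
  · rintro ⟨_, h₂, hfac⟩
    exact sq_add_eps_ne_zero h₂ (sq_add_eq_zero_of_X_sq_add_C_eq_mul_X_sub_C hfac)
  · rintro ⟨h, hroot⟩
    exact sq_add_eps_ne_zero h hroot
end

section
/- Let C = t² + ε𝐢 ∈ 𝔻ℍ[t]. Then for every monic quaternion polynomial D ∈ ℍ[t] (viewed in 𝔻ℍ[t] with zero dual part), the product C·D admits no factorization into linear factors: there is no n and no h₁, …, hₙ ∈ 𝔻ℍ with C·D = (t − h₁)(t − h₂) ⋯ (t − hₙ). -/
/-!
Send `𝔻ℍ[t]` to the dual numbers over `ℍ[t]`, `P + εQ ↦ (P, Q)`. The left-hand side becomes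
`t²D + ε𝐢D` and a linear factor `t - h` becomes `(t - a) - εb`. For a product of such factors,
`t^(m+1) ∣ P` implies `t^m ∣ Q`, by induction on the number of factors: a factor with `a ≠ 0`
is invertible at `t = 0`, so it can be cancelled from `t^(m+1) ∣ (t - a)P'`, while a factor with
`a = 0` is cancelled against one power of `t`. Taking `m = ord_t D + 1` gives
`t^(ord_t D + 1) ∣ 𝐢D`, impossible since `𝐢 ≠ 0` and `ℍ` has no zero divisors.
-/

open Polynomial DualNumber

/-- Quaternion unit `𝐢`. -/
def qi : Quaternion ℝ := ⟨0, 1, 0, 0⟩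

/-- The dual quaternion with primal part `a` and dual part `b`, i.e. `a + εb`. -/
def dq (a b : Quaternion ℝ) : DH := (a, b)

variable {R S : Type*}

namespace DualNumber

variable [Semiring R] [Semiring S]

def mapRingHom (f : R →+* S) : R[ε] →+* S[ε] where
  toFun z := TrivSqZeroExt.inl (f z.fst) + TrivSqZeroExt.inr (f z.snd)
  map_one' := by ext <;> simp
  map_mul' z w := by ext <;> simp
  map_zero' := by ext <;> simp
  map_add' z w := by ext <;> simp

@[simp]
theorem fst_mapRingHom (f : R →+* S) (z : R[ε]) : (mapRingHom f z).fst = f z.fst := by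
  simp [mapRingHom]

@[simp]
theorem snd_mapRingHom (f : R →+* S) (z : R[ε]) : (mapRingHom f z).snd = f z.snd := by
  simp [mapRingHom]

end DualNumber

namespace Polynomial

section Semiring

variable [Semiring R] {n : ℕ}

theorem X_pow_dvd_iff_le_natTrailingDegree {p : R[X]} (hp : p ≠ 0) :
    X ^ n ∣ p ↔ n ≤ p.natTrailingDegree := by
  rw [X_pow_dvd_iff]
  exact ⟨le_natTrailingDegree hp,
    fun h _ hd => coeff_eq_zero_of_lt_natTrailingDegree (hd.trans_le h)⟩

theorem X_pow_natTrailingDegree_dvd (p : R[X]) : X ^ p.natTrailingDegree ∣ p :=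
  X_pow_dvd_iff.mpr fun _ hd => coeff_eq_zero_of_lt_natTrailingDegree hd

theorem X_pow_dvd_mul_left_of_dvd {p : R[X]} (h : X ^ n ∣ p) (q : R[X]) : X ^ n ∣ q * p := by
  obtain ⟨r, rfl⟩ := h
  exact ⟨q * r, by rw [← mul_assoc, ← X_pow_mul, mul_assoc]⟩

theorem commute_mapRingHom_C_inl_X (z : R[ε]) :
    Commute (DualNumber.mapRingHom C z) (TrivSqZeroExt.inl X) := by
  ext <;> simp [X_mul]

noncomputable def toDualNumber : (R[ε])[X] →+* (R[X])[ε] :=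
  eval₂RingHom' (DualNumber.mapRingHom C) (TrivSqZeroExt.inl X) commute_mapRingHom_C_inl_X

@[simp]
theorem toDualNumber_X : toDualNumber (X : (R[ε])[X]) = TrivSqZeroExt.inl X :=
  eval₂_X _ _

@[simp]
theorem toDualNumber_C (z : R[ε]) : toDualNumber (C z) = DualNumber.mapRingHom C z :=
  eval₂_C _ _

@[simp]
theorem toDualNumber_map_inl (p : R[X]) :
    toDualNumber (p.map (TrivSqZeroExt.inlHom R R)) = TrivSqZeroExt.inl p := by
  induction p using Polynomial.induction_on' with
  | add p q hp hq => simp [hp, hq]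
  | monomial n a => ext <;> simp [← C_mul_X_pow_eq_monomial]

end Semiring

section Domain

variable [Ring R] [IsDomain R] {n : ℕ}

theorem X_pow_dvd_of_dvd_X_sub_C_mul {a : R} (ha : a ≠ 0) {p : R[X]}
    (h : X ^ n ∣ (X - C a) * p) : X ^ n ∣ p := by
  rcases eq_or_ne p 0 with rfl | hp
  · exact dvd_zero _
  have hXa : X - C a ≠ 0 := X_sub_C_ne_zero a
  have hXa_ord : (X - C a).natTrailingDegree = 0 := by simp [ha]
  rwa [X_pow_dvd_iff_le_natTrailingDegree (mul_ne_zero hXa hp), natTrailingDegree_mul hXa hp,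
    hXa_ord, zero_add, ← X_pow_dvd_iff_le_natTrailingDegree hp] at h

theorem not_X_pow_natTrailingDegree_succ_dvd_C_mul {c : R} (hc : c ≠ 0) {p : R[X]}
    (hp : p ≠ 0) : ¬ X ^ (p.natTrailingDegree + 1) ∣ C c * p := by
  have hC : C c ≠ 0 := C_ne_zero.mpr hc
  rw [X_pow_dvd_iff_le_natTrailingDegree (mul_ne_zero hC hp), natTrailingDegree_mul hC hp,
    natTrailingDegree_C]
  omega

theorem X_pow_dvd_snd_of_X_pow_succ_dvd_fst_prod_X_sub_C (l : List R[ε])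
    (h : X ^ (n + 1) ∣ (toDualNumber (l.map fun z => X - C z).prod).fst) :
    X ^ n ∣ (toDualNumber (l.map fun z => X - C z).prod).snd := by
  induction l generalizing n with
  | nil => simp
  | cons z l ih =>
    simp only [List.map_cons, List.prod_cons, map_mul, map_sub, toDualNumber_X, toDualNumber_C,
      TrivSqZeroExt.fst_mul, TrivSqZeroExt.snd_mul, TrivSqZeroExt.fst_sub, TrivSqZeroExt.snd_sub,
      TrivSqZeroExt.fst_inl, TrivSqZeroExt.snd_inl, DualNumber.fst_mapRingHom,
      DualNumber.snd_mapRingHom, smul_eq_mul, op_smul_eq_mul] at h ⊢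
    by_cases ha : z.fst = 0
    · rw [ha, C_0, sub_zero] at h ⊢
      rw [pow_succ', mul_dvd_mul_iff_left X_ne_zero] at h
      refine dvd_add ?_ (X_pow_dvd_mul_left_of_dvd h _)
      rcases n with _ | n
      · exact pow_zero (X : R[X]) ▸ one_dvd _
      · exact pow_succ' (X : R[X]) n ▸ mul_dvd_mul_left X (ih h)
    · have hfst := X_pow_dvd_of_dvd_X_sub_C_mul ha h
      exact dvd_add (X_pow_dvd_mul_left_of_dvd (ih hfst) _)
        (X_pow_dvd_mul_left_of_dvd ((pow_dvd_pow X n.le_succ).trans hfst) _)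

end Domain

end Polynomial

/-- For the unbounded motion polynomial `F = t² + ε𝐢` and every monic quaternion
polynomial `D` (viewed in `𝔻ℍ[t]` with zero dual part), the product `F·D` admits no
factorization into linear factors. -/
theorem no_factorization_after_quaternion_multiplication
    (D : Polynomial (Quaternion ℝ)) (hD : D.Monic) :
    ¬ ∃ (n : ℕ) (h : Fin n → DH),
      (X ^ 2 + Polynomial.C (dq 0 qi) : Polynomial DH) *
          D.map (TrivSqZeroExt.inlHom (Quaternion ℝ) (Quaternion ℝ)) =
        (List.ofFn fun i => X - Polynomial.C (h i)).prod := by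
  rintro ⟨n, h, heq⟩
  have hqi : qi ≠ 0 := fun hq => one_ne_zero (congrArg QuaternionAlgebra.imI hq : (1 : ℝ) = 0)
  have hdq : dq 0 qi = TrivSqZeroExt.inr qi := rfl
  have key : X ^ (D.natTrailingDegree + 1 + 1) ∣ X ^ 2 * D →
      X ^ (D.natTrailingDegree + 1) ∣ C qi * D := by
    have := X_pow_dvd_snd_of_X_pow_succ_dvd_fst_prod_X_sub_C (List.ofFn h)
      (n := D.natTrailingDegree + 1)
    rw [List.map_ofFn, Function.comp_def, ← heq] at this
    simpa [hdq] using this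
  refine not_X_pow_natTrailingDegree_succ_dvd_C_mul hqi hD.ne_zero (key ?_)
  rw [show D.natTrailingDegree + 1 + 1 = 2 + D.natTrailingDegree by omega, pow_add]
  exact mul_dvd_mul_left _ (X_pow_natTrailingDegree_dvd D)
end

section
/- Let R be an associative real algebra with identity, equipped with an involution γ (an ℝ-linear anti-automorphism with γ∘γ = id) such that γ(a)·a = a·γ(a) ∈ ℝ·1 for all a ∈ R. Then for every polynomial C ∈ R[t] one has C·γ(C) = γ(C)·C, and every coefficient of C·γ(C) lies in ℝ·1; that is, the norm polynomial ν(C) = C·γ(C) is a real polynomial. -/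
open Polynomial Finset

lemma coeff_pconj {R : Type*} [Ring R] [StarRing R] (p : R[X]) (n : ℕ) :
    (pconj p).coeff n = star (p.coeff n) := by
  simp [pconj, Polynomial.coeff]

lemma Finset.Nat.sum_antidiagonal_add_self {M : Type*} [AddCommMonoid M] (n : ℕ)
    (g : ℕ × ℕ → M) :
    ∑ x ∈ antidiagonal n, g x + ∑ x ∈ antidiagonal n, g x =
      ∑ x ∈ antidiagonal n, (g x + g x.swap) := by
  nth_rewrite 2 [← Finset.Nat.sum_antidiagonal_swap]
  exact Finset.sum_add_distrib.symm

lemma Subalgebra.mem_of_add_self_mem {K A : Type*} [Field K] [NeZero (2 : K)] [Ring A]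
    [Algebra K A] (S : Subalgebra K A) {x : A} (h : x + x ∈ S) : x ∈ S := by
  rw [← two_smul K x] at h
  exact (Submodule.smul_mem_iff (Subalgebra.toSubmodule S) two_ne_zero).mp h

section Polarization

variable {R : Type*} [Ring R] [StarRing R]

lemma star_mul_add_star_mul_eq (hcomm : ∀ a : R, star a * a = a * star a) (a b : R) :
    star a * b + star b * a = a * star b + b * star a := by
  have h := hcomm (a + b)
  simp only [star_add, add_mul, mul_add, hcomm a, hcomm b] at h
  linear_combination (norm := noncomm_ring) h

lemma star_mul_add_star_mul_mem {S : Type*} [SetLike S R] [AddSubgroupClass S R] {s : S}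
    (hreal : ∀ a : R, star a * a ∈ s) (a b : R) : star a * b + star b * a ∈ s := by
  have h := sub_mem (sub_mem (hreal (a + b)) (hreal a)) (hreal b)
  convert h using 1
  rw [star_add]
  noncomm_ring

end Polarization

section NormPolynomial

variable {R : Type*} [Ring R] [StarRing R]

lemma coeff_pconj_mul_add_self (F : R[X]) (i : ℕ) :
    (pconj F * F).coeff i + (pconj F * F).coeff i =
      ∑ x ∈ antidiagonal i,
        (star (F.coeff x.1) * F.coeff x.2 + star (F.coeff x.2) * F.coeff x.1) := by
  simp only [coeff_mul, coeff_pconj]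
  exact Nat.sum_antidiagonal_add_self i fun x => star (F.coeff x.1) * F.coeff x.2

lemma coeff_mul_pconj_add_self (hcomm : ∀ a : R, star a * a = a * star a) (F : R[X]) (i : ℕ) :
    (F * pconj F).coeff i + (F * pconj F).coeff i =
      ∑ x ∈ antidiagonal i,
        (star (F.coeff x.1) * F.coeff x.2 + star (F.coeff x.2) * F.coeff x.1) := by
  simp only [coeff_mul, coeff_pconj, star_mul_add_star_mul_eq hcomm]
  exact Nat.sum_antidiagonal_add_self i fun x => F.coeff x.1 * star (F.coeff x.2)

end NormPolynomial

theorem norm_polynomial_is_real_general {R : Type*} [Ring R] [Algebra ℝ R]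
    [StarRing R]
    (hcomm : ∀ a : R, star a * a = a * star a)
    (hreal : ∀ a : R, ∃ r : ℝ, star a * a = algebraMap ℝ R r)
    (F : Polynomial R) :
    F * pconj F = pconj F * F ∧
    ∀ i : ℕ, ∃ r : ℝ, (F * pconj F).coeff i = algebraMap ℝ R r := by
  have hreal_bot : ∀ a : R, star a * a ∈ (⊥ : Subalgebra ℝ R) := fun a =>
    Algebra.mem_bot.mpr <| (hreal a).imp fun _ h => h.symm
  constructor
  · ext i
    refine smul_right_injective R (two_ne_zero' ℝ) ?_
    simp only [two_smul, coeff_mul_pconj_add_self hcomm, coeff_pconj_mul_add_self]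
  · intro i
    have hmem : (F * pconj F).coeff i ∈ (⊥ : Subalgebra ℝ R) := by
      refine Subalgebra.mem_of_add_self_mem _ ?_
      rw [coeff_mul_pconj_add_self hcomm]
      exact sum_mem fun x _ => star_mul_add_star_mul_mem hreal_bot _ _
    obtain ⟨r, hr⟩ := Algebra.mem_bot.mp hmem
    exact ⟨r, hr.symm⟩

/-- If the involution satisfies `star a * a = a * star a ∈ ℝ·1` for all `a`, then for every
polynomial `F` one has `F · γ(F) = γ(F) · F` and every coefficient of the norm polynomial
`ν(F) = F · γ(F)` lies in `ℝ·1`. -/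
theorem norm_polynomial_is_real {R : Type*} [Ring R] [Algebra ℝ R]
    [StarRing R] [StarModule ℝ R]
    (hcomm : ∀ a : R, star a * a = a * star a)
    (hreal : ∀ a : R, ∃ r : ℝ, star a * a = algebraMap ℝ R r)
    (F : Polynomial R) :
    F * pconj F = pconj F * F ∧
    ∀ i : ℕ, ∃ r : ℝ, (F * pconj F).coeff i = algebraMap ℝ R r :=
  norm_polynomial_is_real_general hcomm hreal F
end
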